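/- Let n, k, r be integers with k, r ≥ 2 and n ≥ k + r − 1. If H is a vertex-k-maximal r-uniform hypergraph on n vertices, then κ̄(H) = κ(H) = k. -/

import Mathlib

/-!
Since `κ(H) ≤ κ̄(H) ≤ k`, it suffices to show `κ(H) ≥ k`. If `H` has no vertex-cut, then
`κ(H) = n - 1 ≥ k`. Otherwise let `S` be a minimum vertex-cut and suppose `|S| < k`. As
`n - |S| ≥ r`, there is an `r`-set `e` outside `S` containing two vertices `u`, `v` that `S`
separates; `e` is not an edge of `H`. A subhypergraph `H'` of `H + e` either avoids `e`, so that
`κ(H') ≤ κ̄(H) ≤ k`, or contains it, and then `S` together with `u` or `v` cuts `H'`, or `H'` has at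
most `|S| + 2` vertices; in every case `κ(H') ≤ k`, contradicting maximality.
-/

/-- A finite hypergraph: a finite vertex set together with a finite set of
non-empty edges, each a subset of the vertex set. -/
structure FinHypergraph where
  verts : Finset ℕ
  edges : Finset (Finset ℕ)
  edge_sub : ∀ e ∈ edges, e ⊆ verts
  edge_nonempty : ∀ e ∈ edges, e.Nonempty

namespace FinHypergraph

/-- `H` is `r`-uniform if every edge has cardinality `r`. -/
def IsUniform (H : FinHypergraph) (r : ℕ) : Prop := ∀ e ∈ H.edges, e.card = r

/-- `H'` is a subhypergraph of `H`. -/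
def IsSub (H' H : FinHypergraph) : Prop := H'.verts ⊆ H.verts ∧ H'.edges ⊆ H.edges

/-- Two vertices are adjacent if some edge contains both. -/
def Adj (H : FinHypergraph) (u v : ℕ) : Prop := ∃ e ∈ H.edges, u ∈ e ∧ v ∈ e

/-- `H` is connected if every pair of vertices is joined by a path
(equivalently, a walk, i.e. is reachable via the adjacency relation). -/
def Connected (H : FinHypergraph) : Prop :=
  ∀ u ∈ H.verts, ∀ v ∈ H.verts, Relation.ReflTransGen H.Adj u v

/-- The subhypergraph of `H` induced by the vertex set `Y`. -/
def induce (H : FinHypergraph) (Y : Finset ℕ) : FinHypergraph where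
  verts := H.verts ∩ Y
  edges := H.edges.filter (fun e => e ⊆ Y)
  edge_sub := by
    intro e he
    simp only [Finset.mem_filter] at he
    exact Finset.subset_inter (H.edge_sub e he.1) he.2
  edge_nonempty := by
    intro e he
    simp only [Finset.mem_filter] at he
    exact H.edge_nonempty e he.1

/-- `X` is a vertex-cut of `H` if deleting `X` leaves a disconnected hypergraph. -/
def IsVertexCut (H : FinHypergraph) (X : Finset ℕ) : Prop :=
  X ⊆ H.verts ∧ ¬ (H.induce (H.verts \ X)).Connected

open Classical in
/-- The vertex-connectivity of `H`: the minimum cardinality of a vertex-cut if one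
exists, and `|V(H)| - 1` otherwise. -/
noncomputable def kappa (H : FinHypergraph) : ℕ :=
  if ∃ X, H.IsVertexCut X then sInf {m | ∃ X, H.IsVertexCut X ∧ X.card = m}
  else H.verts.card - 1

/-- `κ̄(H)`: the maximum vertex-connectivity over all subhypergraphs of `H`. -/
noncomputable def kappaBar (H : FinHypergraph) : ℕ :=
  sSup {m | ∃ H' : FinHypergraph, H'.IsSub H ∧ H'.kappa = m}

/-- `H + e`: add the edge `e` (a non-empty subset of the vertices) to `H`. -/
def addEdge (H : FinHypergraph) (e : Finset ℕ) : FinHypergraph where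
  verts := H.verts
  edges := if e ⊆ H.verts ∧ e.Nonempty then insert e H.edges else H.edges
  edge_sub := by
    intro f hf
    split at hf
    · rcases Finset.mem_insert.mp hf with rfl | hf
      · exact (by assumption : f ⊆ H.verts ∧ f.Nonempty).1
      · exact H.edge_sub f hf
    · exact H.edge_sub f hf
  edge_nonempty := by
    intro f hf
    split at hf
    · rcases Finset.mem_insert.mp hf with rfl | hf
      · exact (by assumption : f ⊆ H.verts ∧ f.Nonempty).2
      · exact H.edge_nonempty f hf
    · exact H.edge_nonempty f hf

/-- `H + F`: add a set `F` of edges to `H`. -/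
def addEdges (H : FinHypergraph) (F : Finset (Finset ℕ)) : FinHypergraph where
  verts := H.verts
  edges := H.edges ∪ F.filter (fun e => e ⊆ H.verts ∧ e.Nonempty)
  edge_sub := by
    intro f hf
    rcases Finset.mem_union.mp hf with hf | hf
    · exact H.edge_sub f hf
    · exact (Finset.mem_filter.mp hf).2.1
  edge_nonempty := by
    intro f hf
    rcases Finset.mem_union.mp hf with hf | hf
    · exact H.edge_nonempty f hf
    · exact (Finset.mem_filter.mp hf).2.2

/-- `H` is vertex-`k`-maximal (as an `r`-uniform hypergraph): `κ̄(H) ≤ k`, but adding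
any edge of the complement `H^c` creates a subhypergraph of connectivity at least `k + 1`. -/
def VertexKMaximal (H : FinHypergraph) (r k : ℕ) : Prop :=
  H.IsUniform r ∧ H.kappaBar ≤ k ∧
    ∀ e : Finset ℕ, e ⊆ H.verts → e.card = r → e ∉ H.edges →
      k + 1 ≤ (H.addEdge e).kappaBar

/-- The complete `r`-uniform hypergraph on the vertex set `V`. -/
def completeHG (V : Finset ℕ) (r : ℕ) : FinHypergraph where
  verts := V
  edges := (V.powersetCard r).filter (fun e => e.Nonempty)
  edge_sub := by
    intro e he
    simp only [Finset.mem_filter, Finset.mem_powersetCard] at he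
    exact he.1.1
  edge_nonempty := by
    intro e he
    exact (Finset.mem_filter.mp he).2

/-- The hypergraph on vertex set `V` with no edges. -/
def emptyHG (V : Finset ℕ) : FinHypergraph where
  verts := V
  edges := ∅
  edge_sub := by simp
  edge_nonempty := by simp

/-- The `r`-join `H₁ ∨_r H₂`: the union of `H₁` and `H₂` together with all
`r`-element subsets of `V(H₁) ∪ V(H₂)` meeting both `V(H₁)` and `V(H₂)`. -/
def rJoin (H1 H2 : FinHypergraph) (r : ℕ) : FinHypergraph where
  verts := H1.verts ∪ H2.verts
  edges := H1.edges ∪ H2.edges ∪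
    ((H1.verts ∪ H2.verts).powersetCard r).filter
      (fun e => (e ∩ H1.verts).Nonempty ∧ (e ∩ H2.verts).Nonempty)
  edge_sub := by
    intro e he
    rcases Finset.mem_union.mp he with he | he
    · rcases Finset.mem_union.mp he with he | he
      · exact (H1.edge_sub e he).trans Finset.subset_union_left
      · exact (H2.edge_sub e he).trans Finset.subset_union_right
    · exact (Finset.mem_powersetCard.mp (Finset.mem_filter.mp he).1).1
  edge_nonempty := by
    intro e he
    rcases Finset.mem_union.mp he with he | he
    · rcases Finset.mem_union.mp he with he | he
      · exact H1.edge_nonempty e he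
      · exact H2.edge_nonempty e he
    · obtain ⟨x, hx⟩ := (Finset.mem_filter.mp he).2.1
      exact ⟨x, (Finset.mem_inter.mp hx).1⟩

/-- The union of two hypergraphs. -/
def hUnion (H1 H2 : FinHypergraph) : FinHypergraph where
  verts := H1.verts ∪ H2.verts
  edges := H1.edges ∪ H2.edges
  edge_sub := by
    intro e he
    rcases Finset.mem_union.mp he with he | he
    · exact (H1.edge_sub e he).trans Finset.subset_union_left
    · exact (H2.edge_sub e he).trans Finset.subset_union_right
  edge_nonempty := by
    intro e he
    rcases Finset.mem_union.mp he with he | he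
    · exact H1.edge_nonempty e he
    · exact H2.edge_nonempty e he

/-- The union of the hypergraphs `f 0, …, f (m-1)`. -/
def unionOver (m : ℕ) (f : ℕ → FinHypergraph) : FinHypergraph where
  verts := (Finset.range m).biUnion (fun i => (f i).verts)
  edges := (Finset.range m).biUnion (fun i => (f i).edges)
  edge_sub := by
    intro e he
    obtain ⟨i, hi, hei⟩ := Finset.mem_biUnion.mp he
    exact ((f i).edge_sub e hei).trans (Finset.subset_biUnion_of_mem (fun i => (f i).verts) hi)
  edge_nonempty := by
    intro e he
    obtain ⟨i, _, hei⟩ := Finset.mem_biUnion.mp he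
    exact (f i).edge_nonempty e hei

/-- `C` is a component of `G`: a maximal connected subhypergraph. -/
def IsComponent (G C : FinHypergraph) : Prop :=
  C.IsSub G ∧ C.Connected ∧
    ∀ C' : FinHypergraph, C'.IsSub G → C'.Connected → C.IsSub C' → C' = C

/-- `(S, H₁, H₂)` is a separation triple of `H`: `S` is a minimum vertex-cut,
`H₁ = H[S ∪ V(C₁)]` and `H₂ = H[S ∪ V(C₂)]`, where `C₁` is a component of `H - S`
and `C₂ = H - (S ∪ V(C₁))`. -/
def IsSeparationTriple (H : FinHypergraph) (S : Finset ℕ) (H1 H2 : FinHypergraph) : Prop :=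
  H.IsVertexCut S ∧ (∀ X : Finset ℕ, H.IsVertexCut X → S.card ≤ X.card) ∧
    ∃ C1 : FinHypergraph, IsComponent (H.induce (H.verts \ S)) C1 ∧
      H1 = H.induce (S ∪ C1.verts) ∧
      H2 = H.induce (S ∪ (H.verts \ (S ∪ C1.verts)))

end FinHypergraph

namespace FinHypergraph

open Finset Relation

section Connectivity

variable {G : FinHypergraph} {X : Finset ℕ}

lemma isSub_refl (G : FinHypergraph) : G.IsSub G := ⟨Subset.rfl, Subset.rfl⟩

lemma IsVertexCut.exists_not_reachable (h : G.IsVertexCut X) :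
    ∃ u ∈ G.verts \ X, ∃ v ∈ G.verts \ X,
      ¬ ReflTransGen (G.induce (G.verts \ X)).Adj u v := by
  obtain ⟨-, hnc⟩ := h
  simp only [Connected, induce, mem_inter, not_forall] at hnc
  obtain ⟨u, ⟨-, hu⟩, v, ⟨-, hv⟩, huv⟩ := hnc
  exact ⟨u, hu, v, hv, huv⟩

lemma IsVertexCut.card_add_two_le (h : G.IsVertexCut X) : X.card + 2 ≤ G.verts.card := by
  obtain ⟨u, hu, v, hv, huv⟩ := h.exists_not_reachable
  have hne : u ≠ v := fun h => huv (h ▸ .refl)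
  have hpair : ({u, v} : Finset ℕ) ⊆ G.verts \ X := insert_subset hu (singleton_subset_iff.2 hv)
  have := card_le_card hpair
  rw [card_pair hne, card_sdiff_of_subset h.1] at this
  have := card_le_card h.1
  omega

lemma kappa_le_card_of_isVertexCut (h : G.IsVertexCut X) : G.kappa ≤ X.card := by
  rw [kappa, if_pos ⟨X, h⟩]
  exact Nat.sInf_le ⟨X, h, rfl⟩

lemma exists_isVertexCut_card_eq_kappa (h : ∃ X, G.IsVertexCut X) :
    ∃ X, G.IsVertexCut X ∧ X.card = G.kappa := by
  obtain ⟨X, hX⟩ := h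
  rw [kappa, if_pos ⟨X, hX⟩]
  exact Nat.sInf_mem (s := {m | ∃ X, G.IsVertexCut X ∧ X.card = m}) ⟨X.card, X, hX, rfl⟩

lemma kappa_eq_card_sub_one (h : ¬ ∃ X, G.IsVertexCut X) : G.kappa = G.verts.card - 1 := by
  rw [kappa, if_neg h]

lemma kappa_le_card_sub_one (G : FinHypergraph) : G.kappa ≤ G.verts.card - 1 := by
  by_cases h : ∃ X, G.IsVertexCut X
  · obtain ⟨X, hX⟩ := h
    have := kappa_le_card_of_isVertexCut hX
    have := hX.card_add_two_le
    omega
  · exact (kappa_eq_card_sub_one h).le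

lemma bddAbove_kappa_of_isSub (G : FinHypergraph) :
    BddAbove {m | ∃ H' : FinHypergraph, H'.IsSub G ∧ H'.kappa = m} := by
  refine ⟨G.verts.card, ?_⟩
  rintro m ⟨H', hsub, rfl⟩
  have := kappa_le_card_sub_one H'
  have := card_le_card hsub.1
  omega

lemma kappa_le_kappaBar {H' : FinHypergraph} (h : H'.IsSub G) : H'.kappa ≤ G.kappaBar :=
  le_csSup (bddAbove_kappa_of_isSub G) ⟨H', h, rfl⟩

lemma exists_isSub_kappa_eq_kappaBar (G : FinHypergraph) :
    ∃ H' : FinHypergraph, H'.IsSub G ∧ H'.kappa = G.kappaBar :=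
  Nat.sSup_mem (s := {m | ∃ H' : FinHypergraph, H'.IsSub G ∧ H'.kappa = m})
    ⟨G.kappa, G, isSub_refl G, rfl⟩ (bddAbove_kappa_of_isSub G)

end Connectivity

section AddEdge

variable {H H' : FinHypergraph} {S e : Finset ℕ}

lemma edges_addEdge_subset (H : FinHypergraph) (e : Finset ℕ) :
    (H.addEdge e).edges ⊆ insert e H.edges := by
  unfold addEdge
  split
  · exact Subset.rfl
  · exact subset_insert e H.edges

lemma IsSub.of_isSub_addEdge (hH' : H'.IsSub (H.addEdge e)) (he : e ∉ H'.edges) :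
    H'.IsSub H := by
  refine ⟨hH'.1, fun f hf => ?_⟩
  rcases mem_insert.1 (edges_addEdge_subset H e (hH'.2 hf)) with rfl | hfH
  · exact absurd hf he
  · exact hfH

/-- Deleting `S` and one vertex `w` of the new edge `e` separates `p` from `q` in `H'`: every
edge of `H'` that survives misses `w`, so it is not `e` and is an edge of `H - S`. -/
lemma kappa_le_of_not_reachable (hH' : H'.IsSub (H.addEdge e)) {u w p q : ℕ} (hw : w ∈ e)
    (hp : p ∈ H'.verts \ insert w S) (hq : q ∈ H'.verts \ insert w S)
    (hup : ReflTransGen (H.induce (H.verts \ S)).Adj u p)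
    (huq : ¬ ReflTransGen (H.induce (H.verts \ S)).Adj u q) :
    H'.kappa ≤ S.card + 1 := by
  set X := H'.verts ∩ insert w S
  have hrest : H'.verts \ X = H'.verts \ insert w S := by
    ext z
    simp only [X, mem_sdiff, mem_inter]
    tauto
  have hedges : (H'.induce (H'.verts \ X)).edges ⊆ (H.induce (H.verts \ S)).edges := by
    intro f hf
    simp only [induce, mem_filter, hrest, subset_sdiff, disjoint_insert_right] at hf ⊢
    obtain ⟨hfH', -, hwf, hSf⟩ := hf
    have hfH : f ∈ H.edges := by
      rcases mem_insert.1 (edges_addEdge_subset H e (hH'.2 hfH')) with rfl | hfH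
      · exact absurd hw hwf
      · exact hfH
    exact ⟨hfH, H.edge_sub f hfH, hSf⟩
  have hcut : H'.IsVertexCut X := by
    refine ⟨inter_subset_left, fun hcon => huq (hup.trans ?_)⟩
    have hpq := hcon p (by simp [induce, hrest, hp, (mem_sdiff.1 hp).1])
      q (by simp [induce, hrest, hq, (mem_sdiff.1 hq).1])
    exact ReflTransGen.mono (fun x y ⟨f, hf, hxf, hyf⟩ => ⟨f, hedges hf, hxf, hyf⟩) _ _ hpq
  calc H'.kappa ≤ X.card := kappa_le_card_of_isVertexCut hcut
    _ ≤ (insert w S).card := card_le_card inter_subset_right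
    _ ≤ S.card + 1 := card_insert_le w S

lemma kappa_le_of_isSub_addEdge {u v : ℕ} (hu : u ∉ S) (hv : v ∉ S)
    (huv : ¬ ReflTransGen (H.induce (H.verts \ S)).Adj u v) (hue : u ∈ e) (hve : v ∈ e)
    (hH' : H'.IsSub (H.addEdge e)) (he : e ∈ H'.edges) :
    H'.kappa ≤ S.card + 1 := by
  have hne : u ≠ v := fun h => huv (h ▸ .refl)
  have huH' : u ∈ H'.verts := H'.edge_sub e he hue
  have hvH' : v ∈ H'.verts := H'.edge_sub e he hve
  by_cases hp : ∃ p ∈ H'.verts \ insert u S, ReflTransGen (H.induce (H.verts \ S)).Adj u p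
  · obtain ⟨p, hp, hup⟩ := hp
    exact kappa_le_of_not_reachable hH' hue hp (by simp [hvH', hv, hne.symm]) hup huv
  by_cases hq : ∃ q ∈ H'.verts \ insert v S, ¬ ReflTransGen (H.induce (H.verts \ S)).Adj u q
  · obtain ⟨q, hq, huq⟩ := hq
    exact kappa_le_of_not_reachable hH' hve (by simp [huH', hu, hne]) hq ReflTransGen.refl huq
  push Not at hp hq
  have hsmall : H'.verts ⊆ insert u (insert v S) := by
    intro z hz
    by_cases hzS : z ∈ S
    · simp [hzS]
    by_cases huz : ReflTransGen (H.induce (H.verts \ S)).Adj u z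
    · by_contra h
      exact hp z (by simp_all) huz
    · by_contra h
      exact huz (hq z (by simp_all))
  have := card_le_card hsmall
  have := card_insert_le u (insert v S)
  have := card_insert_le v S
  have := kappa_le_card_sub_one H'
  omega

lemma kappaBar_addEdge_le {u v : ℕ} (hu : u ∉ S) (hv : v ∉ S)
    (huv : ¬ ReflTransGen (H.induce (H.verts \ S)).Adj u v) (hue : u ∈ e) (hve : v ∈ e) :
    (H.addEdge e).kappaBar ≤ max H.kappaBar (S.card + 1) := by
  obtain ⟨H', hH', hκ⟩ := exists_isSub_kappa_eq_kappaBar (H.addEdge e)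
  rw [← hκ]
  by_cases he : e ∈ H'.edges
  · exact le_max_of_le_right (kappa_le_of_isSub_addEdge hu hv huv hue hve hH' he)
  · exact le_max_of_le_left (kappa_le_kappaBar (hH'.of_isSub_addEdge he))

lemma IsVertexCut.exists_kappaBar_addEdge_le {r : ℕ} (hS : H.IsVertexCut S) (hr : 2 ≤ r)
    (hrS : S.card + r ≤ H.verts.card) :
    ∃ e ⊆ H.verts, e.card = r ∧ e ∉ H.edges ∧
      (H.addEdge e).kappaBar ≤ max H.kappaBar (S.card + 1) := by
  obtain ⟨u, hu, v, hv, huv⟩ := hS.exists_not_reachable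
  have hne : u ≠ v := fun h => huv (h ▸ .refl)
  have hpair : ({u, v} : Finset ℕ) ⊆ H.verts \ S := insert_subset hu (singleton_subset_iff.2 hv)
  have hroom : r ≤ (H.verts \ S).card := by
    rw [card_sdiff_of_subset hS.1]
    omega
  obtain ⟨e, huve, heS, hcard⟩ :=
    exists_subsuperset_card_eq hpair (by rw [card_pair hne]; exact hr) hroom
  have hue : u ∈ e := huve (mem_insert_self u {v})
  have hve : v ∈ e := huve (mem_insert_of_mem (mem_singleton_self v))
  refine ⟨e, heS.trans sdiff_subset, hcard, fun he => huv ?_,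
    kappaBar_addEdge_le (mem_sdiff.1 hu).2 (mem_sdiff.1 hv).2 huv hue hve⟩
  exact ReflTransGen.single ⟨e, mem_filter.2 ⟨he, heS⟩, hue, hve⟩

end AddEdge

end FinHypergraph

open FinHypergraph in
theorem stmt_2 (n k r : ℕ) (hr : 2 ≤ r) (hn : k + r - 1 ≤ n)
    (H : FinHypergraph) (hcard : H.verts.card = n) (hH : H.VertexKMaximal r k) :
    H.kappaBar = k ∧ H.kappa = k := by
  obtain ⟨-, hbar, hmax⟩ := hH
  have hle : H.kappa ≤ H.kappaBar := kappa_le_kappaBar (isSub_refl H)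
  have hge : k ≤ H.kappa := by
    by_cases hcut : ∃ X, H.IsVertexCut X
    · by_contra! hlt
      obtain ⟨S, hS, hSκ⟩ := exists_isVertexCut_card_eq_kappa hcut
      obtain ⟨e, heV, hecard, he, hκe⟩ := hS.exists_kappaBar_addEdge_le hr (by omega)
      have := hmax e heV hecard he
      omega
    · rw [kappa_eq_card_sub_one hcut]
      omega
  omega
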